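/- arXiv:2001.02571 — 3 statements merged into one kernel-verified Lean document; each statement's English description precedes it below -/
import Mathlib

section
/- For d ≥ 3, the constant C(d) = (16/Γ(d/2)) ∫₀^∞ e^{−ρ²} ρ^{d+1} / (2(d−2) + 4ρ²) dρ satisfies the upper bound C(d) < (2/(d−2))^{1/2} · Γ((d+1)/2)/Γ(d/2). -/
open MeasureTheory

/-- The blowup constant `C(d)`. -/
noncomputable def blowupC (d : ℕ) : ℝ :=
  (16 / Real.Gamma ((d : ℝ) / 2)) *
    ∫ ρ in Set.Ioi (0 : ℝ),
      Real.exp (-ρ ^ 2) * ρ ^ (d + 1) / (2 * ((d : ℝ) - 2) + 4 * ρ ^ 2)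

/-!
By AM-GM, `ρ / (a/2 + ρ²) ≤ 1 / (2√(a/2))` with equality only at `ρ = √(a/2)`. Hence the
integrand of `C(d)`, with `a = d - 2`, is at most `√(2/a)/8 · ρ^d e^{-ρ²}`, strictly for
`ρ > √(a/2)`, and `∫₀^∞ ρ^d e^{-ρ²} dρ = Γ((d+1)/2)/2`.
-/

open Real Set

theorem integral_lt_integral_of_ae_le_of_measure_setOf_lt_ne_zero {α : Type*}
    [MeasurableSpace α] {μ : Measure α} {f g : α → ℝ}
    (hf : Integrable f μ) (hg : Integrable g μ)
    (hle : f ≤ᵐ[μ] g) (hlt : μ {x | f x < g x} ≠ 0) :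
    ∫ x, f x ∂μ < ∫ x, g x ∂μ := by
  rw [← sub_pos, ← integral_sub hg hf, integral_pos_iff_support_of_nonneg_ae
    (hle.mono fun _ => sub_nonneg.2) (hg.sub hf)]
  exact pos_iff_ne_zero.2 (mt (measure_mono_null fun x hx => (sub_pos.2 hx.out).ne') hlt)

theorem integrableOn_pow_mul_exp_neg_sq (n : ℕ) :
    IntegrableOn (fun x : ℝ => x ^ n * exp (-x ^ 2)) (Ioi 0) := by
  have h := integrableOn_rpow_mul_exp_neg_mul_sq one_pos (neg_one_lt_zero.trans_le n.cast_nonneg)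
  simpa only [rpow_natCast, neg_mul, one_mul] using h

theorem integral_pow_mul_exp_neg_sq (n : ℕ) :
    ∫ x in Ioi (0 : ℝ), x ^ n * exp (-x ^ 2) = Gamma ((n + 1) / 2) / 2 := by
  have h := integral_rpow_mul_exp_neg_rpow two_pos (neg_one_lt_zero.trans_le n.cast_nonneg)
  rw [one_div_mul_eq_div] at h
  rw [← h]
  norm_cast

theorem div_add_sq_le {b : ℝ} (hb : 0 < b) (x : ℝ) : x / (b + x ^ 2) ≤ (√b)⁻¹ / 2 := by
  have hs := sq_sqrt hb.le
  have hs0 := sqrt_pos.2 hb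
  rw [div_le_div_iff₀ (by positivity) two_pos, inv_mul_eq_div, le_div_iff₀ hs0]
  nlinarith [sq_nonneg (√b - x)]

theorem div_add_sq_lt {b x : ℝ} (hb : 0 < b) (hx : x ≠ √b) :
    x / (b + x ^ 2) < (√b)⁻¹ / 2 := by
  have hs := sq_sqrt hb.le
  have hs0 := sqrt_pos.2 hb
  rw [div_lt_div_iff₀ (by positivity) two_pos, inv_mul_eq_div, lt_div_iff₀ hs0]
  nlinarith [sq_pos_of_ne_zero (sub_ne_zero.2 hx)]

theorem exp_mul_pow_div_eq (n : ℕ) (a x : ℝ) :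
    exp (-x ^ 2) * x ^ (n + 1) / (2 * a + 4 * x ^ 2) =
      x / (a / 2 + x ^ 2) / 4 * (x ^ n * exp (-x ^ 2)) := by
  rw [show 2 * a + 4 * x ^ 2 = 4 * (a / 2 + x ^ 2) by ring]
  generalize a / 2 + x ^ 2 = v
  ring

theorem integral_exp_mul_pow_div_lt (n : ℕ) {a : ℝ} (ha : 0 < a) :
    ∫ x in Ioi (0 : ℝ), exp (-x ^ 2) * x ^ (n + 1) / (2 * a + 4 * x ^ 2) <
      √(2 / a) * Gamma ((n + 1) / 2) / 16 := by
  have ha2 : 0 < a / 2 := by positivity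
  set K := (√(a / 2))⁻¹ / 2 / 4 with hK
  have hg := integrableOn_pow_mul_exp_neg_sq n
  have hle : ∀ x > 0,
      exp (-x ^ 2) * x ^ (n + 1) / (2 * a + 4 * x ^ 2) ≤ K * (x ^ n * exp (-x ^ 2)) := by
    intro x hx
    rw [exp_mul_pow_div_eq]
    gcongr ?_ * _
    exact div_le_div_of_nonneg_right (div_add_sq_le ha2 x) four_pos.le
  have hlt : ∀ x > √(a / 2),
      exp (-x ^ 2) * x ^ (n + 1) / (2 * a + 4 * x ^ 2) < K * (x ^ n * exp (-x ^ 2)) := by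
    intro x hx
    have hx0 : 0 < x := (sqrt_nonneg _).trans_lt hx
    rw [exp_mul_pow_div_eq]
    gcongr ?_ * _
    exact div_lt_div_of_pos_right (div_add_sq_lt ha2 hx.ne') four_pos
  have hf : IntegrableOn (fun x => exp (-x ^ 2) * x ^ (n + 1) / (2 * a + 4 * x ^ 2)) (Ioi 0) := by
    refine (hg.const_mul K).mono' (by fun_prop : Measurable _).aestronglyMeasurable ?_
    refine ae_restrict_of_forall_mem measurableSet_Ioi fun x (hx : 0 < x) => ?_
    rw [norm_of_nonneg (by positivity)]
    exact hle x hx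
  have hlt_pos : volume.restrict (Ioi 0) {x |
      exp (-x ^ 2) * x ^ (n + 1) / (2 * a + 4 * x ^ 2) < K * (x ^ n * exp (-x ^ 2))} ≠ 0 := by
    refine ne_of_gt (lt_of_lt_of_le ?_ (measure_mono (s := Ioi √(a / 2)) hlt))
    rw [Measure.restrict_apply' measurableSet_Ioi,
      inter_eq_left.2 (Ioi_subset_Ioi (sqrt_nonneg _)), volume_Ioi]
    exact ENNReal.zero_lt_top
  calc _ < ∫ x in Ioi (0 : ℝ), K * (x ^ n * exp (-x ^ 2)) :=
        integral_lt_integral_of_ae_le_of_measure_setOf_lt_ne_zero hf (hg.const_mul K)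
          (ae_restrict_of_forall_mem measurableSet_Ioi hle) hlt_pos
    _ = √(2 / a) * Gamma ((n + 1) / 2) / 16 := by
      rw [integral_const_mul, integral_pow_mul_exp_neg_sq, hK, ← sqrt_inv, inv_div]
      ring

/-- Upper bound for `C(d)`. -/
theorem blowupC_upper_bound (d : ℕ) (hd : 3 ≤ d) :
    blowupC d < Real.sqrt (2 / ((d : ℝ) - 2)) *
      (Real.Gamma (((d : ℝ) + 1) / 2) / Real.Gamma ((d : ℝ) / 2)) := by
  have ha : (0 : ℝ) < d - 2 := by
    have : (3 : ℝ) ≤ d := by exact_mod_cast hd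
    linarith
  have hΓ : 0 < Gamma ((d : ℝ) / 2) := Gamma_pos_of_pos (by positivity)
  calc blowupC d = 16 * (∫ ρ in Ioi (0 : ℝ),
          exp (-ρ ^ 2) * ρ ^ (d + 1) / (2 * ((d : ℝ) - 2) + 4 * ρ ^ 2)) /
        Gamma ((d : ℝ) / 2) := by
        rw [blowupC]; ring
    _ < 16 * (√(2 / ((d : ℝ) - 2)) * Gamma ((d + 1) / 2) / 16) / Gamma ((d : ℝ) / 2) := by
        gcongr
        exact integral_exp_mul_pow_div_lt d ha
    _ = _ := by ring
end

section
/- For d ≥ 3, the constant C(d) = (16/Γ(d/2)) ∫₀^∞ e^{−ρ²} ρ^{d+1} / (2(d−2) + 4ρ²) dρ satisfies the lower bound C(d) > (2/(d−1)) · (Γ((d+1)/2)/Γ(d/2))². -/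
/-!
Write `W(ρ) = 2(d-2) + 4ρ²` and weigh by `e^{-ρ²}`. With `u = e^{-ρ²} ρ^d` and
`w = e^{-ρ²} ρ^{d-1} W`, the integrand of `C(d)` is `u²/w`, so Cauchy–Schwarz in Engel form gives
`∫ u²/w ≥ (∫ u)² / ∫ w`. Both `∫ u = Γ((d+1)/2)/2` and `∫ w = 2(d-1) Γ(d/2)` are Gaussian moments,
and the resulting bound is exactly the claimed one. It is strict because `u = c w` would force
`ρ = c W(ρ)`, a nontrivial polynomial equation.
-/

open MeasureTheory

open Real Set

theorem integrableOn_exp_neg_sq_mul_pow (k : ℕ) :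
    IntegrableOn (fun x : ℝ => exp (-x ^ 2) * x ^ k) (Ioi 0) := by
  refine (integrableOn_rpow_mul_exp_neg_rpow (s := k) (by linarith [k.cast_nonneg (α := ℝ)])
    two_pos).congr_fun (fun x _ => ?_) measurableSet_Ioi
  simp only [rpow_natCast, rpow_two]
  ring

theorem integral_exp_neg_sq_mul_pow (k : ℕ) :
    ∫ x in Ioi (0 : ℝ), exp (-x ^ 2) * x ^ k = Gamma ((k + 1) / 2) / 2 := by
  have h := integral_rpow_mul_exp_neg_rpow (q := k) two_pos (by linarith [k.cast_nonneg (α := ℝ)])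
  simp only [rpow_natCast, rpow_two] at h
  simp only [mul_comm (exp _), h]
  ring

theorem integrableOn_exp_neg_sq_mul_pow_mul_quadratic (k : ℕ) (a b : ℝ) :
    IntegrableOn (fun x : ℝ => exp (-x ^ 2) * x ^ k * (a + b * x ^ 2)) (Ioi 0) := by
  refine IntegrableOn.congr_fun (((integrableOn_exp_neg_sq_mul_pow k).const_mul a).add
    ((integrableOn_exp_neg_sq_mul_pow (k + 2)).const_mul b)) (fun x _ => ?_) measurableSet_Ioi
  simp only [Pi.add_apply]
  ring

theorem integral_exp_neg_sq_mul_pow_mul_quadratic (k : ℕ) (a b : ℝ) :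
    ∫ x in Ioi (0 : ℝ), exp (-x ^ 2) * x ^ k * (a + b * x ^ 2) =
      (a * Gamma ((k + 1) / 2) + b * Gamma ((k + 3) / 2)) / 2 := by
  calc ∫ x in Ioi (0 : ℝ), exp (-x ^ 2) * x ^ k * (a + b * x ^ 2)
      = ∫ x in Ioi (0 : ℝ), (a * (exp (-x ^ 2) * x ^ k) + b * (exp (-x ^ 2) * x ^ (k + 2))) :=
        setIntegral_congr_fun measurableSet_Ioi fun x _ => by ring
    _ = _ := by
      rw [integral_add ((integrableOn_exp_neg_sq_mul_pow k).const_mul a)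
        ((integrableOn_exp_neg_sq_mul_pow (k + 2)).const_mul b), integral_const_mul,
        integral_const_mul, integral_exp_neg_sq_mul_pow, integral_exp_neg_sq_mul_pow]
      push_cast
      ring_nf

theorem integrableOn_exp_neg_sq_mul_pow_add_two_div_quadratic (k : ℕ) {a b : ℝ} (ha : 0 ≤ a)
    (hb : 0 < b) :
    IntegrableOn (fun x : ℝ => exp (-x ^ 2) * x ^ (k + 2) / (a + b * x ^ 2)) (Ioi 0) := by
  refine Integrable.mono' ((integrableOn_exp_neg_sq_mul_pow k).const_mul b⁻¹)
    (Measurable.aestronglyMeasurable (by fun_prop)) ?_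
  filter_upwards [ae_restrict_mem measurableSet_Ioi] with x (hx : 0 < x)
  have hden : 0 < a + b * x ^ 2 := by positivity
  rw [Real.norm_of_nonneg (by positivity), div_le_iff₀ hden, pow_add]
  field_simp
  nlinarith [mul_nonneg (mul_nonneg (exp_pos (-x ^ 2)).le (pow_pos hx k).le) ha]

theorem ae_ne_mul_add_mul_sq (c a b : ℝ) : ∀ᵐ x : ℝ, x ≠ c * (a + b * x ^ 2) := by
  open Polynomial in
  set P : ℝ[X] := C (c * b) * X ^ 2 - X + C (c * a)
  have hP : P ≠ 0 := fun h => by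
    simpa [P, mul_assoc, coeff_C_mul, coeff_X_pow, coeff_X_one, coeff_C] using
      congrArg (coeff · 1) h
  refine measure_mono_null (fun x (hx : ¬ x ≠ _) => ?_)
    ((Polynomial.finite_setOfPred_isRoot hP).measure_zero volume)
  simp only [mem_ofPred_eq, IsRoot, P, eval_add, eval_sub, eval_mul, eval_C, eval_pow, eval_X]
  rw [not_not] at hx
  linear_combination -hx

theorem not_ae_exp_neg_sq_mul_pow_succ_eq_mul (k : ℕ) (a b c : ℝ) :
    ¬ ∀ᵐ x ∂volume.restrict (Ioi 0),
      exp (-x ^ 2) * x ^ (k + 1) = c * (exp (-x ^ 2) * x ^ k * (a + b * x ^ 2)) := by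
  intro h
  have h_false : ∀ᵐ x ∂volume.restrict (Ioi (0 : ℝ)), False := by
    filter_upwards [h, ae_restrict_mem measurableSet_Ioi,
      ae_restrict_of_ae (ae_ne_mul_add_mul_sq c a b)] with x hx hx0 hne
    have hx_pos : 0 < x := hx0
    refine hne (mul_left_cancel₀ (by positivity : exp (-x ^ 2) * x ^ k ≠ 0) ?_)
    linear_combination hx
  rw [Filter.eventually_false_iff_eq_bot, ae_eq_bot, Measure.restrict_eq_zero,
    volume_Ioi] at h_false
  exact ENNReal.top_ne_zero h_false

theorem sq_integral_div_integral_lt_integral_sq_div {α : Type*} [MeasurableSpace α]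
    {μ : Measure α} {u w : α → ℝ} (hu : Integrable u μ) (hw : Integrable w μ)
    (huw : Integrable (fun x => u x ^ 2 / w x) μ) (hw_pos : ∀ᵐ x ∂μ, 0 < w x)
    (h_not_prop : ∀ c : ℝ, ¬ ∀ᵐ x ∂μ, u x = c * w x) :
    (∫ x, u x ∂μ) ^ 2 / ∫ x, w x ∂μ < ∫ x, u x ^ 2 / w x ∂μ := by
  have hw_int_pos : 0 < ∫ x, w x ∂μ := by
    refine (integral_nonneg_of_ae (hw_pos.mono fun x hx => hx.le)).lt_of_ne' fun h => ?_
    refine h_not_prop 0 ?_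
    filter_upwards [(integral_eq_zero_iff_of_nonneg_ae (hw_pos.mono fun x hx => hx.le) hw).1 h,
      hw_pos] with x hx0 hx
    simp only [Pi.zero_apply] at hx0
    linarith
  set l := (∫ x, u x ∂μ) / ∫ x, w x ∂μ
  set F := fun x => u x ^ 2 / w x - 2 * l * u x + l ^ 2 * w x
  have hF : ∀ᵐ x ∂μ, F x = (u x - l * w x) ^ 2 / w x := by
    filter_upwards [hw_pos] with x hx
    simp only [F]
    field_simp
    ring
  have hF_nonneg : 0 ≤ᵐ[μ] F := by
    filter_upwards [hF, hw_pos] with x hFx hx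
    rw [Pi.zero_apply, hFx]
    positivity
  have hF_int : Integrable F μ := (huw.sub (hu.const_mul (2 * l))).add (hw.const_mul (l ^ 2))
  have hF_int_pos : 0 < ∫ x, F x ∂μ := by
    refine (integral_nonneg_of_ae hF_nonneg).lt_of_ne' fun h => h_not_prop l ?_
    filter_upwards [(integral_eq_zero_iff_of_nonneg_ae hF_nonneg hF_int).1 h, hF, hw_pos]
      with x hx0 hFx hx
    rw [Pi.zero_apply, hFx, div_eq_zero_iff, sq_eq_zero_iff, sub_eq_zero] at hx0
    exact hx0.resolve_right hx.ne'
  have hF_eq : ∫ x, F x ∂μ = ∫ x, u x ^ 2 / w x ∂μ - (∫ x, u x ∂μ) ^ 2 / ∫ x, w x ∂μ := by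
    rw [integral_add (f := fun x => u x ^ 2 / w x - 2 * l * u x) (g := fun x => l ^ 2 * w x)
        (huw.sub (hu.const_mul (2 * l))) (hw.const_mul (l ^ 2)),
      integral_sub huw (hu.const_mul (2 * l)), integral_const_mul, integral_const_mul]
    simp only [l]
    field_simp
    ring
  linarith

/-- Lower bound for `C(d)`. -/
theorem blowupC_lower_bound (d : ℕ) (hd : 3 ≤ d) :
    (2 / ((d : ℝ) - 1)) *
      (Real.Gamma (((d : ℝ) + 1) / 2) / Real.Gamma ((d : ℝ) / 2)) ^ 2 < blowupC d := by
  obtain ⟨k, rfl⟩ : ∃ k, d = k + 1 := ⟨d - 1, by omega⟩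
  unfold blowupC
  have hk : (1 : ℝ) ≤ k := by exact_mod_cast (by omega : 1 ≤ k)
  set a : ℝ := 2 * (((k + 1 : ℕ) : ℝ) - 2)
  have ha : 0 ≤ a := by push_cast [a]; linarith
  have h_integrand : ∀ x ∈ Ioi (0 : ℝ),
      (exp (-x ^ 2) * x ^ (k + 1)) ^ 2 / (exp (-x ^ 2) * x ^ k * (a + 4 * x ^ 2)) =
        exp (-x ^ 2) * x ^ (k + 1 + 1) / (a + 4 * x ^ 2) := by
    intro x (hx : 0 < x)
    have : 0 < a + 4 * x ^ 2 := by positivity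
    field_simp
    ring
  have key := sq_integral_div_integral_lt_integral_sq_div (μ := volume.restrict (Ioi 0))
    (integrableOn_exp_neg_sq_mul_pow (k + 1))
    (integrableOn_exp_neg_sq_mul_pow_mul_quadratic k a 4)
    ((integrableOn_exp_neg_sq_mul_pow_add_two_div_quadratic k ha four_pos).congr_fun
      (fun x hx => (h_integrand x hx).symm) measurableSet_Ioi)
    (by filter_upwards [ae_restrict_mem measurableSet_Ioi] with x (hx : 0 < x); positivity)
    (not_ae_exp_neg_sq_mul_pow_succ_eq_mul k a 4)
  rw [setIntegral_congr_fun measurableSet_Ioi h_integrand, integral_exp_neg_sq_mul_pow,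
    integral_exp_neg_sq_mul_pow_mul_quadratic] at key
  have hΓ : Gamma ((k + 3) / 2) = (k + 1) / 2 * Gamma ((k + 1) / 2) := by
    rw [← Gamma_add_one (by positivity)]; ring_nf
  have hΓ_pos : 0 < Gamma ((k + 1) / 2) := Gamma_pos_of_pos (by positivity)
  calc _ = 16 / Gamma ((k + 1) / 2) * ((Gamma ((k + 1 + 1) / 2) / 2) ^ 2 /
        ((a * Gamma ((k + 1) / 2) + 4 * Gamma ((k + 3) / 2)) / 2)) := by
        rw [hΓ]; push_cast [a]; field_simp; ring
    _ < _ := by push_cast at key ⊢; gcongr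
end

section
/- Let d ≥ 3 and let M : (0,∞) → ℝ be a C¹ function with 0 ≤ M(y) ≤ 2 ε σ_d y^{d−2} for all y > 0, where ε ∈ (0,1). Define f(y) = exp( y²/4 − ∫_y^{y*} M(s)/(σ_d s^{d−1}) ds ) for a fixed y* > 0 (assuming the integral ∫₀^{y*} M(s)/(σ_d s^{d−1}) ds is finite). Then f(y) → ∞ as y → ∞, and lim_{y→∞} ( ∫_{y*}^{y} s f(s) ds ) / ( 2 f(y) ) = 1. -/
/-!
With `h s = M s / (σ s^(d-1))`, the integrating factor is `f y = exp (y²/4 + ∫_{y*}^y h)`, and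
`(2 f)' = (y + 2 h y) f` while `(∫_{y*}^y s f s ds)' = y f`. Since `h ≥ 0`, `f ≥ exp (y²/4) → ∞`,
and since `h y ≤ 2ε/y`, the ratio of the derivatives `y / (y + 2 h y)` tends to `1`; L'Hôpital's
rule for `∞/∞` gives the limit of the quotient.
-/

open MeasureTheory Filter intervalIntegral Set Topology

section LHopital

variable {f g f' g' : ℝ → ℝ}

theorem eventually_div_lt_of_deriv_div_lt {b c : ℝ}
    (hf : ∀ᶠ x in atTop, HasDerivAt f (f' x) x) (hg : ∀ᶠ x in atTop, HasDerivAt g (g' x) x)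
    (hg' : ∀ᶠ x in atTop, 0 < g' x) (hgtop : Tendsto g atTop atTop)
    (hfg : ∀ᶠ x in atTop, f' x / g' x < b) (hbc : b < c) :
    ∀ᶠ x in atTop, f x / g x < c := by
  obtain ⟨Y, hY⟩ := eventually_atTop.1 (hf.and (hg.and (hg'.and hfg)))
  have hderiv : ∀ x ∈ Ici Y, HasDerivAt (fun x => f x - b * g x) (f' x - b * g' x) x :=
    fun x hx => (hY x hx).1.sub ((hY x hx).2.1.const_mul b)
  have hanti : AntitoneOn (fun x => f x - b * g x) (Ici Y) := by
    refine antitoneOn_of_hasDerivWithinAt_nonpos (convex_Ici Y)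
      (fun x hx => (hderiv x hx).continuousAt.continuousWithinAt)
      (fun x hx => (hderiv x (interior_subset hx)).hasDerivWithinAt) fun x hx => ?_
    obtain ⟨-, -, hpos, hlt⟩ := hY x (interior_subset hx)
    rw [div_lt_iff₀ hpos] at hlt
    linarith
  have hsmall : Tendsto (fun x => (f Y - b * g Y) / g x) atTop (𝓝 0) :=
    tendsto_const_nhds.div_atTop hgtop
  filter_upwards [eventually_ge_atTop Y, hgtop.eventually_gt_atTop 0,
    hsmall.eventually (gt_mem_nhds (sub_pos.2 hbc))] with x hYx hgx hx
  have hmono := hanti self_mem_Ici hYx hYx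
  rw [div_lt_iff₀ hgx] at hx ⊢
  linarith

theorem lhopital_atTop_of_tendsto_atTop {l : ℝ}
    (hf : ∀ᶠ x in atTop, HasDerivAt f (f' x) x) (hg : ∀ᶠ x in atTop, HasDerivAt g (g' x) x)
    (hg' : ∀ᶠ x in atTop, 0 < g' x) (hgtop : Tendsto g atTop atTop)
    (hl : Tendsto (fun x => f' x / g' x) atTop (𝓝 l)) :
    Tendsto (fun x => f x / g x) atTop (𝓝 l) := by
  refine tendsto_order.2 ⟨fun c hc => ?_, fun c hc => ?_⟩
  · obtain ⟨b, hcb, hbl⟩ := exists_between hc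
    have hneg := eventually_div_lt_of_deriv_div_lt (f := -f) (f' := -f') (b := -b) (c := -c)
      (hf.mono fun x hx => hx.neg) hg hg' hgtop
      ((hl.eventually (lt_mem_nhds hbl)).mono fun x hx => by
        rw [Pi.neg_apply, neg_div]; linarith) (neg_lt_neg hcb)
    filter_upwards [hneg] with x hx
    rw [Pi.neg_apply, neg_div] at hx
    linarith
  · obtain ⟨b, hlb, hbc⟩ := exists_between hc
    exact eventually_div_lt_of_deriv_div_lt hf hg hg' hgtop (hl.eventually (gt_mem_nhds hlb)) hbc

end LHopital

section IntegratingFactor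

variable {h : ℝ → ℝ} {a b : ℝ}

theorem hasDerivAt_integral_of_continuousOn_Ioi {φ : ℝ → ℝ} (hφ : ContinuousOn φ (Ioi b))
    (hab : b < a) {y : ℝ} (hy : b < y) : HasDerivAt (fun u => ∫ s in a..u, φ s) (φ y) y :=
  integral_hasDerivAt_right
    ((hφ.mono fun _ hx => (lt_min hab hy).trans_le hx.1).intervalIntegrable)
    (hφ.stronglyMeasurableAtFilter isOpen_Ioi y hy) (hφ.continuousAt (isOpen_Ioi.mem_nhds hy))

noncomputable def integratingFactor (h : ℝ → ℝ) (a y : ℝ) : ℝ :=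
  Real.exp (y ^ 2 / 4 + ∫ s in a..y, h s)

theorem integratingFactor_pos (y : ℝ) : 0 < integratingFactor h a y := Real.exp_pos _

theorem hasDerivAt_integratingFactor (hh : ContinuousOn h (Ioi b)) (hab : b < a) {y : ℝ}
    (hy : b < y) :
    HasDerivAt (integratingFactor h a) ((y / 2 + h y) * integratingFactor h a y) y := by
  have hsq : HasDerivAt (fun y : ℝ => y ^ 2 / 4) (y / 2) y := by
    simpa using ((hasDerivAt_pow 2 y).div_const 4).congr_deriv (by ring)
  exact (hsq.add (hasDerivAt_integral_of_continuousOn_Ioi hh hab hy)).exp.congr_deriv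
    (mul_comm _ _)

theorem tendsto_integratingFactor_atTop (hh : ∀ s, a ≤ s → 0 ≤ h s) :
    Tendsto (integratingFactor h a) atTop atTop := by
  have hexp : Tendsto (fun y : ℝ => Real.exp (y ^ 2 / 4)) atTop atTop :=
    Real.tendsto_exp_atTop.comp ((tendsto_pow_atTop two_ne_zero).atTop_div_const (by norm_num))
  refine tendsto_atTop_mono' atTop ?_ hexp
  filter_upwards [eventually_ge_atTop a] with y hy
  have hG : 0 ≤ ∫ s in a..y, h s := integral_nonneg hy fun s hs => hh s hs.1
  exact Real.exp_le_exp.2 (by linarith)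

theorem tendsto_integral_mul_integratingFactor_div (hh : ContinuousOn h (Ioi b)) (hab : b < a)
    (hh0 : ∀ s, a ≤ s → 0 ≤ h s) (hlim : Tendsto (fun s => h s / s) atTop (𝓝 0)) :
    Tendsto (fun y => (∫ s in a..y, s * integratingFactor h a s) / (2 * integratingFactor h a y))
      atTop (𝓝 1) := by
  have hF : ∀ y, b < y →
      HasDerivAt (integratingFactor h a) ((y / 2 + h y) * integratingFactor h a y) y :=
    fun y hy => hasDerivAt_integratingFactor hh hab hy
  have hFcont : ContinuousOn (fun s => s * integratingFactor h a s) (Ioi b) :=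
    continuousOn_id.mul fun y hy => (hF y hy).continuousAt.continuousWithinAt
  have hratio : Tendsto (fun y => (1 + 2 * (h y / y))⁻¹) atTop (𝓝 1) := by
    simpa using ((tendsto_const_nhds (x := (1 : ℝ))).add (hlim.const_mul 2)).inv₀
      (by norm_num)
  have hpos : ∀ᶠ y in atTop, 0 < y ∧ 0 ≤ h y :=
    (eventually_gt_atTop 0).and ((eventually_ge_atTop a).mono hh0)
  refine lhopital_atTop_of_tendsto_atTop
    ((eventually_gt_atTop b).mono fun y hy => hasDerivAt_integral_of_continuousOn_Ioi hFcont hab hy)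
    ((eventually_gt_atTop b).mono fun y hy => (hF y hy).const_mul 2) ?_
    ((tendsto_integratingFactor_atTop hh0).const_mul_atTop two_pos) (hratio.congr' ?_)
  · filter_upwards [hpos] with y ⟨hy, hhy⟩
    have := integratingFactor_pos (h := h) (a := a) y
    positivity
  · filter_upwards [hpos] with y ⟨hy, hhy⟩
    have := integratingFactor_pos (h := h) (a := a) y
    field_simp

end IntegratingFactor

theorem integrating_factor_asymptotics_general (d : ℕ) (hd : 3 ≤ d) (σ ε ystar : ℝ)
    (hσ : 0 < σ) (hy : 0 < ystar)
    (M : ℝ → ℝ) (hM : ContDiffOn ℝ 1 M (Set.Ioi 0))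
    (hM0 : ∀ y : ℝ, 0 < y → 0 ≤ M y ∧ M y ≤ 2 * ε * σ * y ^ (d - 2)) :
    Tendsto (fun y : ℝ =>
        Real.exp (y ^ 2 / 4 - ∫ s in y..ystar, M s / (σ * s ^ (d - 1))))
      atTop atTop ∧
    Tendsto (fun y : ℝ =>
        (∫ s in ystar..y, s *
            Real.exp (s ^ 2 / 4 - ∫ τ in s..ystar, M τ / (σ * τ ^ (d - 1)))) /
          (2 * Real.exp (y ^ 2 / 4 - ∫ s in y..ystar, M s / (σ * s ^ (d - 1)))))
      atTop (nhds 1) := by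
  set h : ℝ → ℝ := fun s => M s / (σ * s ^ (d - 1))
  have hcont : ContinuousOn h (Ioi 0) :=
    hM.continuousOn.div (continuous_const.mul (continuous_pow _)).continuousOn
      fun s hs => by have : (0 : ℝ) < s := hs; positivity
  have hh0 : ∀ s, 0 < s → 0 ≤ h s := fun s hs => div_nonneg (hM0 s hs).1 (by positivity)
  have hbound : ∀ s, 0 < s → h s / s ≤ 2 * ε / s / s := by
    intro s hs
    have hpow : s ^ (d - 1) = s ^ (d - 2) * s := by rw [← pow_succ]; congr 1; omega
    gcongr
    rw [div_le_iff₀ (by positivity), hpow]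
    calc M s ≤ 2 * ε * σ * s ^ (d - 2) := (hM0 s hs).2
      _ = 2 * ε / s * (σ * (s ^ (d - 2) * s)) := by field_simp
  have hlim : Tendsto (fun s => h s / s) atTop (𝓝 0) :=
    squeeze_zero' ((eventually_gt_atTop 0).mono fun s hs => div_nonneg (hh0 s hs) hs.le)
      ((eventually_gt_atTop 0).mono hbound)
      ((tendsto_const_nhds.div_atTop tendsto_id).div_atTop tendsto_id)
  have hh0' : ∀ s, ystar ≤ s → 0 ≤ h s := fun s hs => hh0 s (hy.trans_le hs)
  simp only [integral_symm ystar, sub_neg_eq_add]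
  exact ⟨tendsto_integratingFactor_atTop hh0',
    tendsto_integral_mul_integratingFactor_div hcont hy hh0' hlim⟩

/-- Asymptotics of the integrating factor `f` and of `∫_{y*}^y s f(s) ds / (2 f(y))`. -/
theorem integrating_factor_asymptotics (d : ℕ) (hd : 3 ≤ d) (σ ε ystar : ℝ)
    (hσ : 0 < σ) (hε : ε ∈ Set.Ioo (0 : ℝ) 1) (hy : 0 < ystar)
    (M : ℝ → ℝ) (hM : ContDiffOn ℝ 1 M (Set.Ioi 0))
    (hM0 : ∀ y : ℝ, 0 < y → 0 ≤ M y ∧ M y ≤ 2 * ε * σ * y ^ (d - 2))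
    (hint : IntegrableOn (fun s => M s / (σ * s ^ (d - 1))) (Set.Ioo 0 ystar)) :
    Tendsto (fun y : ℝ =>
        Real.exp (y ^ 2 / 4 - ∫ s in y..ystar, M s / (σ * s ^ (d - 1))))
      atTop atTop ∧
    Tendsto (fun y : ℝ =>
        (∫ s in ystar..y, s *
            Real.exp (s ^ 2 / 4 - ∫ τ in s..ystar, M τ / (σ * τ ^ (d - 1)))) /
          (2 * Real.exp (y ^ 2 / 4 - ∫ s in y..ystar, M s / (σ * s ^ (d - 1)))))
      atTop (nhds 1) :=
  integrating_factor_asymptotics_general d hd σ ε ystar hσ hy M hM hM0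
end
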